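/- For the polynomial sequence (P_m) of the construction with each b_k a real number satisfying b_k < −6 and with a_k = −√(−b_k) for every k, the set H^k_m is path connected (and hence connected) for every k ≥ 1 and every m ≥ 0. -/

import Mathlib

open Filter Set Metric
open scoped Topology

noncomputable section

/-- `seqQ P m n` is the composition `P n ∘ ⋯ ∘ P (m+1)` (the identity for `n ≤ m`). -/
def seqQ (P : ℕ → ℂ → ℂ) (m : ℕ) : ℕ → ℂ → ℂ
  | 0 => id
  | n + 1 => if n + 1 ≤ m then id else P (n + 1) ∘ seqQ P m n

/-!
Write `r j = √(-b j) ≥ 2`, so that `a j = -r j` and `b j = -r j ^ 2`. Going down from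
`m = M k - 1`, the set `H^k_m` is path connected, contains a point `c_m` and lies in the closed
unit disc around it, where `c_m = -r j` if `m = M j - 1` and `c_m = 0` otherwise. Indeed, the next
map `P (m+1)` is `z ↦ z ^ 2 + c_{m+1}`, except at `m + 1 = M j`, where `z ↦ z ^ 2 - r j ^ 2` is
inverted on the left half plane by the continuous branch `w ↦ -√(w + r j ^ 2)`. In the first case
the preimage of a path-connected set through the critical value `c_{m+1}` is path connected: a
path from `z ^ 2` to `0` has a continuous square root up to its first zero, and that root tends to
`0` there. For `m ≥ M k - 1`, `H^k_m` is a continuous image of `H^k_{M k - 1}`.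
-/

theorem exists_continuous_pow_eq_of_first_zero {δ : ℝ → ℂ} (hδ : Continuous δ) {t₀ : ℝ}
    (hne : ∀ t < t₀, δ t ≠ 0) (hzero : δ t₀ = 0) {n : ℕ} (hn : n ≠ 0) {t₁ : ℝ} (ht₁ : t₁ < t₀)
    {z : ℂ} (hz : z ^ n = δ t₁) :
    ∃ q : ℝ → ℂ, Continuous q ∧ q t₁ = z ∧ (∀ t < t₀, q t ^ n = δ t) ∧ ∀ t, t₀ ≤ t → q t = 0 := by
  have : ContractibleSpace (Iio t₀) := (convex_Iio t₀).contractibleSpace nonempty_Iio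
  obtain ⟨f, hfc, hf⟩ := Complex.exists_continuousOn_pow_eq (U := Iio t₀)
    (SimplyConnectedSpace.ofContractible _) isOpen_Iio hδ.continuousOn
    (by rintro ⟨t, ht, h0⟩; exact hne t ht h0) hn
  have hf₁ : f t₁ ≠ 0 := fun h => hne t₁ ht₁ (by rw [← hf, h, zero_pow hn])
  -- rotate the branch by an `n`-th root of unity so that it starts at `z`
  set u := z / f t₁
  have hu : u ^ n = 1 := by rw [div_pow, hz, ← hf, div_self (pow_ne_zero n hf₁)]
  refine ⟨fun t => if t < t₀ then u * f t else 0, ?_, by simp [ht₁, u, hf₁], fun t ht => ?_,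
    fun t ht => if_neg ht.not_gt⟩
  · have hbound : ∀ t, ‖if t < t₀ then u * f t else 0‖ ≤ ‖δ t‖ ^ (n⁻¹ : ℝ) := by
      intro t
      split_ifs with ht
      · have hu1 : ‖u‖ = 1 := by
          rw [← pow_eq_one_iff_of_nonneg (norm_nonneg u) hn, ← norm_pow, hu, norm_one]
        rw [norm_mul, hu1, one_mul, ← hf t, norm_pow, Real.pow_rpow_inv_natCast (norm_nonneg _) hn]
      · simp only [norm_zero]; positivity
    refine continuous_iff_continuousAt.2 fun t => ?_
    rcases lt_trichotomy t t₀ with ht | rfl | ht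
    · refine (((hfc.continuousAt (Iio_mem_nhds ht)).const_mul u).congr ?_)
      filter_upwards [Iio_mem_nhds ht] with s hs using (if_pos hs).symm
    · have hlim : Tendsto (fun s => ‖δ s‖ ^ (n⁻¹ : ℝ)) (𝓝 t) (𝓝 0) := by
        have := ((Real.continuousAt_rpow_const _ _ (Or.inr (by positivity))).comp
          hδ.norm.continuousAt : ContinuousAt (fun s => ‖δ s‖ ^ (n⁻¹ : ℝ)) t)
        simpa [hzero, Function.comp_def, Real.zero_rpow (inv_ne_zero (Nat.cast_ne_zero.2 hn))]
          using this.tendsto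
      simpa [ContinuousAt] using squeeze_zero_norm hbound hlim
    · refine (continuousAt_const (y := (0 : ℂ))).congr ?_
      filter_upwards [Ioi_mem_nhds ht] with s hs using (if_neg hs.not_gt).symm
  · simp only [if_pos ht, mul_pow, hu, one_mul, hf]

theorem IsPathConnected.preimage_pow {T : Set ℂ} (hT : IsPathConnected T) (h0 : 0 ∈ T) {n : ℕ}
    (hn : n ≠ 0) : IsPathConnected ((· ^ n) ⁻¹' T) := by
  refine ⟨0, by simpa [zero_pow hn] using h0, fun z hz => JoinedIn.symm ?_⟩
  rcases eq_or_ne z 0 with rfl | hz0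
  · exact JoinedIn.refl (by simpa [zero_pow hn] using h0)
  obtain ⟨γ, hγT⟩ := hT.joinedIn _ hz _ h0
  have hδT : ∀ t, γ.extend t ∈ T := fun t => by
    obtain ⟨s, hs⟩ : γ.extend t ∈ range γ := γ.extend_range ▸ mem_range_self t
    exact hs ▸ hγT s
  -- `t₀` is the first time the path `γ.extend` hits `0`
  set Z := γ.extend ⁻¹' {0}
  have hZ_pos : ∀ t ∈ Z, 0 < t := fun t ht => by
    by_contra! h
    exact pow_ne_zero n hz0 ((γ.extend_of_le_zero h).symm.trans ht)
  have hZ_bdd : BddBelow Z := ⟨0, fun t ht => (hZ_pos t ht).le⟩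
  have h1Z : (1 : ℝ) ∈ Z := γ.extend_one
  set t₀ := sInf Z
  have ht₀Z : t₀ ∈ Z := (isClosed_singleton.preimage γ.continuous_extend).csInf_mem ⟨1, h1Z⟩ hZ_bdd
  obtain ⟨q, hqc, hq0, hqT, hq1⟩ := exists_continuous_pow_eq_of_first_zero γ.continuous_extend
    (fun t ht h => notMem_of_lt_csInf ht hZ_bdd h) ht₀Z hn (hZ_pos t₀ ht₀Z) γ.extend_zero.symm
  refine JoinedIn.ofLine hqc.continuousOn hq0 (hq1 1 (csInf_le hZ_bdd h1Z)) ?_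
  rintro _ ⟨t, -, rfl⟩
  rcases lt_or_ge t t₀ with ht | ht
  · exact (mem_preimage (f := (· ^ n))).2 (hqT t ht ▸ hδT t)
  · simpa [hq1 t ht, zero_pow hn] using h0

def IsPathConnectedInUnitBall (S : Set ℂ) (c : ℂ) : Prop :=
  IsPathConnected S ∧ c ∈ S ∧ S ⊆ closedBall c 1

theorem IsPathConnectedInUnitBall.preimage_sq_add {T : Set ℂ} {c : ℂ}
    (h : IsPathConnectedInUnitBall T c) :
    IsPathConnectedInUnitBall ((fun z => z ^ 2 + c) ⁻¹' T) 0 := by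
  obtain ⟨hT, hcT, hTc⟩ := h
  have hshift : (fun z => z ^ 2 + c) ⁻¹' T = (· ^ 2) ⁻¹' ((· + -c) '' T) := by
    rw [image_add_right, neg_neg]; rfl
  refine ⟨?_, by simpa using hcT, fun z hz => ?_⟩
  · rw [hshift]
    exact (hT.image (continuous_add_const _)).preimage_pow ⟨c, hcT, add_neg_cancel c⟩ two_ne_zero
  · have := hTc hz
    rw [mem_closedBall, dist_eq_norm, add_sub_cancel_right, norm_pow,
      pow_le_one_iff_of_nonneg (norm_nonneg z) two_ne_zero] at this
    simpa using this

theorem Complex.sqrt_re_pos {w : ℂ} (hw : 0 < w.re) : 0 < w.sqrt.re := by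
  rw [Complex.sqrt, Complex.cpow_inv_two_re]
  exact Real.sqrt_pos.2 (by linarith [w.re_le_norm])

theorem norm_add_le_one_of_re_nonpos {z : ℂ} {r : ℝ} (hz : z.re ≤ 0) (hr : 2 ≤ r)
    (h : ‖z ^ 2 - (r : ℂ) ^ 2‖ ≤ 2) : ‖z + r‖ ≤ 1 := by
  have hlarge : 2 ≤ ‖z - r‖ := by
    have := (abs_le.1 (Complex.abs_re_le_norm (z - r))).1
    rw [Complex.sub_re, Complex.ofReal_re] at this
    linarith
  have hprod : ‖z + r‖ * ‖z - r‖ ≤ 2 := by rwa [← norm_mul, ← sq_sub_sq]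
  nlinarith [norm_nonneg (z + r)]

theorem isPathConnectedInUnitBall_preimage_sq_sub_inter {r : ℝ} (hr : 2 ≤ r) {V : Set ℂ}
    (hV : IsPathConnected V) (h0 : 0 ∈ V) (hV2 : V ⊆ closedBall 0 2) :
    IsPathConnectedInUnitBall ((fun z => z ^ 2 - (r : ℂ) ^ 2) ⁻¹' V ∩ {z | z.re < 0}) (-r) := by
  have hre : ∀ v ∈ V, 0 < (v + (r : ℂ) ^ 2).re := fun v hv => by
    have := (abs_le.1 (Complex.abs_re_le_norm v)).1
    rw [Complex.add_re, ← Complex.ofReal_pow, Complex.ofReal_re]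
    nlinarith [mem_closedBall_zero_iff.1 (hV2 hv)]
  have himage : (fun z => z ^ 2 - (r : ℂ) ^ 2) ⁻¹' V ∩ {z | z.re < 0} =
      (fun v => -(v + (r : ℂ) ^ 2).sqrt) '' V := by
    ext z
    constructor
    · rintro ⟨hzV, hz⟩
      refine ⟨_, hzV, ?_⟩
      show -(z ^ 2 - (r : ℂ) ^ 2 + (r : ℂ) ^ 2).sqrt = z
      rw [sub_add_cancel, ← neg_sq, Complex.sqrt, Complex.sq_cpow_two_inv (by simpa using hz),
        neg_neg]
    · rintro ⟨v, hv, rfl⟩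
      refine ⟨?_, ?_⟩
      · simpa [neg_sq, Complex.sqrt] using hv
      · simpa using Complex.sqrt_re_pos (hre v hv)
  refine ⟨?_, ⟨by simpa using h0, ?_⟩, fun z ⟨hzV, hz⟩ => ?_⟩
  · rw [himage]
    refine hV.image' fun v hv => ((continuousAt_cpow_const ?_).comp
      (continuousAt_id.add continuousAt_const)).neg.continuousWithinAt
    exact Complex.mem_slitPlane_iff.2 (Or.inl (hre v hv))
  · show (-(r : ℂ)).re < 0
    simp only [Complex.neg_re, Complex.ofReal_re]
    linarith
  · rw [mem_closedBall, dist_eq_norm, sub_neg_eq_add]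
    exact norm_add_le_one_of_re_nonpos hz.le hr (mem_closedBall_zero_iff.1 (hV2 hzV))

theorem connectedComponentIn_eq_inter_of_subset_union {X : Type*} [TopologicalSpace X]
    {S U V : Set X} {x : X} (hU : IsOpen U) (hV : IsOpen V) (hUV : Disjoint U V)
    (hS : S ⊆ U ∪ V) (hx : x ∈ S ∩ U) (hSU : IsPreconnected (S ∩ U)) :
    connectedComponentIn S x = S ∩ U :=
  (subset_inter (connectedComponentIn_subset S x)
    (isPreconnected_connectedComponentIn.subset_left_of_subset_union hU hV hUV
      ((connectedComponentIn_subset S x).trans hS)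
      ⟨x, mem_connectedComponentIn hx.1, hx.2⟩)).antisymm
    (hSU.subset_connectedComponentIn hx inter_subset_left)

theorem connectedComponentIn_preimage_sq_sub {r : ℝ} (hr : 2 ≤ r) :
    connectedComponentIn ((fun z => z ^ 2 - (r : ℂ) ^ 2) ⁻¹' closedBall 0 2) (-r) =
      (fun z => z ^ 2 - (r : ℂ) ^ 2) ⁻¹' closedBall 0 2 ∩ {z | z.re < 0} := by
  obtain ⟨hpc, hmem, -⟩ := isPathConnectedInUnitBall_preimage_sq_sub_inter hr
    ((convex_closedBall 0 2).isPathConnected (nonempty_closedBall.2 zero_le_two))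
    (mem_closedBall_self zero_le_two) subset_rfl
  refine connectedComponentIn_eq_inter_of_subset_union
    (isOpen_lt Complex.continuous_re continuous_const)
    (isOpen_lt continuous_const Complex.continuous_re)
    (disjoint_left.2 fun z (h₁ : z.re < 0) (h₂ : 0 < z.re) => (lt_asymm h₁ h₂).elim)
    (fun z hz => ?_) hmem hpc.isConnected.isPreconnected
  rcases lt_trichotomy z.re 0 with h | h | h
  · exact Or.inl h
  · -- on the imaginary axis `z ^ 2 - r ^ 2` is real and at most `-r ^ 2 < -2`
    have hre : (z ^ 2 - (r : ℂ) ^ 2).re = -z.im ^ 2 - r ^ 2 := by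
      simp only [sq, Complex.sub_re, Complex.mul_re, h, Complex.ofReal_re, Complex.ofReal_im]
      ring
    have := (abs_le.1 (Complex.abs_re_le_norm (z ^ 2 - (r : ℂ) ^ 2))).1
    nlinarith [mem_closedBall_zero_iff.1 hz]
  · exact Or.inr h

theorem continuous_seqQ {P : ℕ → ℂ → ℂ} (hP : ∀ n, 1 ≤ n → Continuous (P n)) (m : ℕ) :
    ∀ n, Continuous (seqQ P m n)
  | 0 => continuous_id
  | n + 1 => by
    rw [seqQ]
    split_ifs
    · exact continuous_id
    · exact (hP (n + 1) (by omega)).comp (continuous_seqQ hP m n)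

theorem add_two_le_of_lt_of_eq_sum {mk M : ℕ → ℕ} (hmk : ∀ k, 1 ≤ k → 1 ≤ mk k)
    (hM : ∀ k, M k = ∑ j ∈ Finset.range k, (mk (j + 1) + 1)) {i j : ℕ} (hij : i < j) :
    M i + 2 ≤ M j := by
  induction j, hij using Nat.le_induction with
  | base => rw [hM, hM, Finset.sum_range_succ]; have := hmk (i + 1) (by omega); omega
  | succ j _ ih => rw [hM (j + 1), Finset.sum_range_succ, ← hM]; omega

-- The construction of the sets `H^k_m`, written in terms of `r j = √(-b j)`.
structure IsHConstruction (M : ℕ → ℕ) (r : ℕ → ℝ) (P : ℕ → ℂ → ℂ) (H : ℕ → ℕ → Set ℂ) :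
    Prop where
  add_two_le : ∀ i j, i < j → M i + 2 ≤ M j
  two_le_r : ∀ j, 1 ≤ j → 2 ≤ r j
  P_sub_one : ∀ j, 1 ≤ j → P (M j - 1) = fun z => z ^ 2 + -(r j : ℂ)
  P_self : ∀ j, 1 ≤ j → P (M j) = fun z => z ^ 2 - (r j : ℂ) ^ 2
  P_other : ∀ m, 1 ≤ m → (∀ j, 1 ≤ j → m ≠ M j - 1 ∧ m ≠ M j) → P m = fun z => z ^ 2
  H_top : ∀ j, 1 ≤ j →
    H j (M j - 1) = (fun z => z ^ 2 - (r j : ℂ) ^ 2) ⁻¹' closedBall 0 2 ∩ {z | z.re < 0}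
  H_down : ∀ k, 1 ≤ k → ∀ m, m + 2 ≤ M k → (∀ j, 1 ≤ j → j < k → m ≠ M j - 1) →
    H k m = P (m + 1) ⁻¹' H k (m + 1)
  H_down_inter : ∀ k, 1 ≤ k → ∀ m, m + 2 ≤ M k → ∀ j, 1 ≤ j → j < k → m = M j - 1 →
    H k m = P (m + 1) ⁻¹' H k (m + 1) ∩ H j (M j - 1)

open Classical in
def ballCenter (M : ℕ → ℕ) (r : ℕ → ℝ) (m : ℕ) : ℂ :=
  if h : ∃ j, 1 ≤ j ∧ m = M j - 1 then -(r h.choose : ℂ) else 0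

theorem ballCenter_of_forall_ne {M : ℕ → ℕ} {r : ℕ → ℝ} {m : ℕ}
    (hm : ∀ j, 1 ≤ j → m ≠ M j - 1) : ballCenter M r m = 0 := by
  rw [ballCenter, dif_neg fun ⟨j, hj, hjm⟩ => hm j hj hjm]

namespace IsHConstruction

variable {M : ℕ → ℕ} {r : ℕ → ℝ} {P : ℕ → ℂ → ℂ} {H : ℕ → ℕ → Set ℂ}

theorem strictMono (h : IsHConstruction M r P H) : StrictMono M :=
  strictMono_nat_of_lt_succ fun j => by have := h.add_two_le j (j + 1) j.lt_succ_self; omega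

theorem two_le (h : IsHConstruction M r P H) {j : ℕ} (hj : 1 ≤ j) : 2 ≤ M j := by
  have := h.add_two_le 0 j hj; omega

theorem add_one_ne (h : IsHConstruction M r P H) (i j : ℕ) : M i + 1 ≠ M j := by
  rcases lt_or_ge i j with hij | hji
  · have := h.add_two_le i j hij; omega
  · have := h.strictMono.monotone hji; omega

theorem ballCenter_sub_one (h : IsHConstruction M r P H) {j : ℕ} (hj : 1 ≤ j) :
    ballCenter M r (M j - 1) = -r j := by
  have hex : ∃ i, 1 ≤ i ∧ M j - 1 = M i - 1 := ⟨j, hj, rfl⟩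
  obtain ⟨hi, hij⟩ := hex.choose_spec
  have := h.two_le hi
  have := h.two_le hj
  rw [ballCenter, dif_pos hex, h.strictMono.injective (by omega : M hex.choose = M j)]

theorem continuous_P (h : IsHConstruction M r P H) {n : ℕ} (hn : 1 ≤ n) : Continuous (P n) := by
  by_cases hA : ∃ j, 1 ≤ j ∧ n = M j - 1
  · obtain ⟨j, hj, rfl⟩ := hA
    rw [h.P_sub_one j hj]; fun_prop
  by_cases hB : ∃ j, 1 ≤ j ∧ n = M j
  · obtain ⟨j, hj, rfl⟩ := hB
    rw [h.P_self j hj]; fun_prop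
  push Not at hA hB
  rw [h.P_other n hn fun j hj => ⟨hA j hj, hB j hj⟩]; fun_prop

theorem isPathConnectedInUnitBall_top (h : IsHConstruction M r P H) {k : ℕ} (hk : 1 ≤ k) :
    IsPathConnectedInUnitBall (H k (M k - 1)) (ballCenter M r (M k - 1)) := by
  rw [h.H_top k hk, h.ballCenter_sub_one hk]
  exact isPathConnectedInUnitBall_preimage_sq_sub_inter (h.two_le_r k hk)
    ((convex_closedBall 0 2).isPathConnected (nonempty_closedBall.2 zero_le_two))
    (mem_closedBall_self zero_le_two) subset_rfl

theorem isPathConnectedInUnitBall_step (h : IsHConstruction M r P H) {k m : ℕ} (hk : 1 ≤ k)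
    (hm : m + 2 ≤ M k)
    (ih : IsPathConnectedInUnitBall (H k (m + 1)) (ballCenter M r (m + 1))) :
    IsPathConnectedInUnitBall (H k m) (ballCenter M r m) := by
  by_cases hA : ∃ j, 1 ≤ j ∧ m + 1 = M j - 1
  · obtain ⟨j, hj, hjm⟩ := hA
    have hm_ne : ∀ i, 1 ≤ i → m ≠ M i - 1 := fun i hi hi' =>
      h.add_one_ne i j (by have := h.two_le hi; omega)
    rw [hjm, h.ballCenter_sub_one hj] at ih
    rw [ballCenter_of_forall_ne hm_ne, h.H_down k hk m hm fun i hi _ => hm_ne i hi, hjm,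
      h.P_sub_one j hj]
    exact ih.preimage_sq_add
  by_cases hB : ∃ j, 1 ≤ j ∧ m + 1 = M j
  · obtain ⟨j, hj, hjm⟩ := hB
    have hm_eq : m = M j - 1 := by omega
    have hjk : j < k := h.strictMono.lt_iff_lt.1 (by omega)
    rw [ballCenter_of_forall_ne fun i hi hi' => h.add_one_ne j i (by have := h.two_le hi; omega)]
      at ih
    have hball : H k (m + 1) ⊆ closedBall 0 2 :=
      ih.2.2.trans (closedBall_subset_closedBall one_le_two)
    rw [h.H_down_inter k hk m hm j hj hjk hm_eq, h.H_top j hj, hjm, h.P_self j hj,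
      ← hjm, ← inter_assoc, ← preimage_inter, inter_eq_left.2 hball,
      show ballCenter M r m = -r j from hm_eq ▸ h.ballCenter_sub_one hj]
    exact isPathConnectedInUnitBall_preimage_sq_sub_inter (h.two_le_r j hj) ih.1 ih.2.1 hball
  push Not at hA hB
  have hm_ne : ∀ i, 1 ≤ i → m ≠ M i - 1 := fun i hi hi' =>
    hB i hi (by have := h.two_le hi; omega)
  have hP : P (m + 1) = fun z => z ^ 2 + 0 := by
    rw [h.P_other (m + 1) (by omega) fun i hi => ⟨hA i hi, hB i hi⟩]
    simp only [add_zero]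
  rw [ballCenter_of_forall_ne hA] at ih
  rw [ballCenter_of_forall_ne hm_ne, h.H_down k hk m hm fun i hi _ => hm_ne i hi, hP]
  exact ih.preimage_sq_add

theorem isPathConnectedInUnitBall (h : IsHConstruction M r P H) {k m : ℕ} (hk : 1 ≤ k)
    (hm : m ≤ M k - 1) :
    IsPathConnectedInUnitBall (H k m) (ballCenter M r m) := by
  refine Nat.decreasingInduction' (fun m hm _ ih => ?_) hm (h.isPathConnectedInUnitBall_top hk)
  exact h.isPathConnectedInUnitBall_step hk (by omega) ih

end IsHConstruction

theorem H_pathConnected_general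
    (a : ℕ → ℂ) (b : ℕ → ℝ) (mk : ℕ → ℕ) (M : ℕ → ℕ)
    (hb : ∀ k, 1 ≤ k → b k < -6)
    (hmk : ∀ k, 1 ≤ k → 1 ≤ mk k)
    (hM : ∀ k, M k = ∑ j ∈ Finset.range k, (mk (j + 1) + 1))
    (P : ℕ → ℂ → ℂ)
    (hPa : ∀ k, 1 ≤ k → P (M k - 1) = fun z => z ^ 2 + a k)
    (hPb : ∀ k, 1 ≤ k → P (M k) = fun z => z ^ 2 + (b k : ℂ))
    (hPother : ∀ m, 1 ≤ m → (∀ k, 1 ≤ k → m ≠ M k - 1 ∧ m ≠ M k) →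
      P m = fun z => z ^ 2)
    (H : ℕ → ℕ → Set ℂ)
    (hHtop : ∀ k, 1 ≤ k → H k (M k - 1) =
      connectedComponentIn (P (M k) ⁻¹' Metric.closedBall 0 2)
        (-((Real.sqrt (-b k) : ℝ) : ℂ)))
    (hHdown : ∀ k, 1 ≤ k → ∀ m, m + 2 ≤ M k →
      (∀ j, 1 ≤ j → j < k → m ≠ M j - 1) → H k m = P (m + 1) ⁻¹' H k (m + 1))
    (hHdown' : ∀ k, 1 ≤ k → ∀ m, m + 2 ≤ M k → ∀ j, 1 ≤ j → j < k → m = M j - 1 →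
      H k m = P (m + 1) ⁻¹' H k (m + 1) ∩ H j (M j - 1))
    (hHup : ∀ k, 1 ≤ k → ∀ m, M k - 1 ≤ m → H k m = seqQ P (M k - 1) m '' H k (M k - 1))
    (ha : ∀ k, 1 ≤ k → a k = -((Real.sqrt (-b k) : ℝ) : ℂ)) :
    ∀ k, 1 ≤ k → ∀ m : ℕ, IsPathConnected (H k m) ∧ IsConnected (H k m) := by
  intro k hk m
  set r : ℕ → ℝ := fun j => √(-b j)
  have hr : ∀ j, 1 ≤ j → 2 ≤ r j := fun j hj =>
    (Real.le_sqrt zero_le_two (by linarith [hb j hj])).2 (by linarith [hb j hj])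
  have hPb' : ∀ j, 1 ≤ j → P (M j) = fun z => z ^ 2 - (r j : ℂ) ^ 2 := fun j hj => by
    rw [hPb j hj, ← Complex.ofReal_pow, Real.sq_sqrt (by linarith [hb j hj]), Complex.ofReal_neg]
    simp_rw [sub_neg_eq_add]
  have hH : IsHConstruction M r P H :=
    { add_two_le := fun i j => add_two_le_of_lt_of_eq_sum hmk hM
      two_le_r := hr
      P_sub_one := fun j hj => by rw [hPa j hj, ha j hj]
      P_self := hPb'
      P_other := hPother
      H_top := fun j hj => by
        rw [hHtop j hj, hPb' j hj, connectedComponentIn_preimage_sq_sub (hr j hj)]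
      H_down := hHdown
      H_down_inter := hHdown' }
  suffices hpc : IsPathConnected (H k m) from ⟨hpc, hpc.isConnected⟩
  rcases le_total m (M k - 1) with hm | hm
  · exact (hH.isPathConnectedInUnitBall hk hm).1
  · rw [hHup k hk m hm]
    exact (hH.isPathConnectedInUnitBall hk le_rfl).1.image
      (continuous_seqQ (fun n hn => hH.continuous_P hn) _ _)

/-- For the constructed polynomial sequence with `b k < −6` real and `a k = −√(−b k)`,
the sets `H^k_m` are path connected (and hence connected) for all `k ≥ 1` and `m ≥ 0`. -/
theorem H_pathConnected
    (a : ℕ → ℂ) (b : ℕ → ℝ) (mk : ℕ → ℕ) (M : ℕ → ℕ)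
    (hb : ∀ k, 1 ≤ k → b k < -6)
    (hmk : ∀ k, 1 ≤ k → 1 ≤ mk k)
    (hinv1 : ∀ k, 1 ≤ k → (2 : ℝ) ^ k < 2 ^ 2 ^ mk k - ‖a k‖)
    (hinv2 : ∀ k, 1 ≤ k →
      (2 : ℝ) ^ k < ((2 : ℝ) ^ 2 ^ mk k - ‖a k‖) ^ 2 - |b k|)
    (hM : ∀ k, M k = ∑ j ∈ Finset.range k, (mk (j + 1) + 1))
    (P : ℕ → ℂ → ℂ)
    (hPa : ∀ k, 1 ≤ k → P (M k - 1) = fun z => z ^ 2 + a k)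
    (hPb : ∀ k, 1 ≤ k → P (M k) = fun z => z ^ 2 + (b k : ℂ))
    (hPother : ∀ m, 1 ≤ m → (∀ k, 1 ≤ k → m ≠ M k - 1 ∧ m ≠ M k) →
      P m = fun z => z ^ 2)
    (G H : ℕ → ℕ → Set ℂ)
    (hGtop : ∀ k, 1 ≤ k → G k (M k - 1) =
      connectedComponentIn (P (M k) ⁻¹' Metric.closedBall 0 2)
        ((Real.sqrt (-b k) : ℝ) : ℂ))
    (hHtop : ∀ k, 1 ≤ k → H k (M k - 1) =
      connectedComponentIn (P (M k) ⁻¹' Metric.closedBall 0 2)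
        (-((Real.sqrt (-b k) : ℝ) : ℂ)))
    (hGdown : ∀ k, 1 ≤ k → ∀ m, m + 2 ≤ M k →
      (∀ j, 1 ≤ j → j < k → m ≠ M j - 1) → G k m = P (m + 1) ⁻¹' G k (m + 1))
    (hGdown' : ∀ k, 1 ≤ k → ∀ m, m + 2 ≤ M k → ∀ j, 1 ≤ j → j < k → m = M j - 1 →
      G k m = P (m + 1) ⁻¹' G k (m + 1) ∩ G j (M j - 1))
    (hHdown : ∀ k, 1 ≤ k → ∀ m, m + 2 ≤ M k →
      (∀ j, 1 ≤ j → j < k → m ≠ M j - 1) → H k m = P (m + 1) ⁻¹' H k (m + 1))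
    (hHdown' : ∀ k, 1 ≤ k → ∀ m, m + 2 ≤ M k → ∀ j, 1 ≤ j → j < k → m = M j - 1 →
      H k m = P (m + 1) ⁻¹' H k (m + 1) ∩ H j (M j - 1))
    (hGup : ∀ k, 1 ≤ k → ∀ m, M k - 1 ≤ m → G k m = seqQ P (M k - 1) m '' G k (M k - 1))
    (hHup : ∀ k, 1 ≤ k → ∀ m, M k - 1 ≤ m → H k m = seqQ P (M k - 1) m '' H k (M k - 1))
    (ha : ∀ k, 1 ≤ k → a k = -((Real.sqrt (-b k) : ℝ) : ℂ)) :
    ∀ k, 1 ≤ k → ∀ m : ℕ, IsPathConnected (H k m) ∧ IsConnected (H k m) :=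
  H_pathConnected_general a b mk M hb hmk hM P hPa hPb hPother H hHtop hHdown hHdown' hHup ha
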